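/- Let δ > 0 and f^δ ∈ L²(ρ) with ‖f^δ − f‖_{L²(ρ)} ≤ δ, and let μ† ∈ M(Ω) satisfy the orthogonality condition L_ρ(f − Kμ†) = 0 on Ω. Then for every ν ∈ M(Ω): ∫_Ω L_ρ(f^δ − Kν) d(ν − μ†) ≤ δ²/4. -/

import Mathlib

open MeasureTheory RealInnerProductSpace

noncomputable section

/-- Integral of a real function against a signed measure, via the Jordan decomposition. -/
def sInt {α : Type*} [MeasurableSpace α] (μ : SignedMeasure α) (g : α → ℝ) : ℝ :=
  (∫ w, g w ∂μ.toJordanDecomposition.posPart) - ∫ w, g w ∂μ.toJordanDecomposition.negPart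

/-- Total variation norm of a signed measure. -/
def tvNorm {α : Type*} [MeasurableSpace α] (μ : SignedMeasure α) : ℝ :=
  (μ.totalVariation Set.univ).toReal

/-- Input space ℝ^d. -/
abbrev Ed (d : ℕ) := EuclideanSpace ℝ (Fin d)

/-- Parameter space ℝ^d × ℝ. -/
abbrev Pd (d : ℕ) := EuclideanSpace ℝ (Fin d) × ℝ

/-- The weight V(a,b) = 1 + ‖a‖ + |b|. -/
def Vw {d : ℕ} (w : Pd d) : ℝ := 1 + ‖w.1‖ + |w.2|

/-- The Barron-norm functional J(μ) = ∫ V d|μ|. -/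
def Jfun {d : ℕ} {Ω : Set (Pd d)} (μ : SignedMeasure ↥Ω) : ℝ :=
  ∫ w, Vw (w : Pd d) ∂μ.totalVariation

/-- (Kμ)(x) = ∫_Ω σ(aᵀx + b) dμ(a,b). -/
def Kop {d : ℕ} (σ : ℝ → ℝ) {Ω : Set (Pd d)} (μ : SignedMeasure ↥Ω) (x : Ed d) : ℝ :=
  sInt μ (fun w => σ (⟪(w : Pd d).1, x⟫ + (w : Pd d).2))

/-- (L_ρ φ)(a,b) = ∫ φ(x) σ(aᵀx + b) dρ(x). -/
def Lop {d : ℕ} (σ : ℝ → ℝ) (ρ : Measure (Ed d)) (φ : Ed d → ℝ) (w : Pd d) : ℝ :=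
  ∫ x, φ x * σ (⟪w.1, x⟫ + w.2) ∂ρ

/-- Squared L²(ρ) norm. -/
def L2sq {d : ℕ} (ρ : Measure (Ed d)) (g : Ed d → ℝ) : ℝ := ∫ x, g x ^ 2 ∂ρ

/-- L²(ρ) norm. -/
def L2norm {d : ℕ} (ρ : Measure (Ed d)) (g : Ed d → ℝ) : ℝ := Real.sqrt (L2sq ρ g)

/-- The loss R_f(μ) = ½‖Kμ − f‖²_{L²(ρ)}. -/
def Rf {d : ℕ} (σ : ℝ → ℝ) {Ω : Set (Pd d)} (ρ : Measure (Ed d)) (f : Ed d → ℝ)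
    (μ : SignedMeasure ↥Ω) : ℝ := (1 / 2) * L2sq ρ (fun x => Kop σ μ x - f x)

/-- Bregman divergence D_J^p(μ, ν) = J(μ) − J(ν) − ∫ p d(μ − ν). -/
def DJ {d : ℕ} {Ω : Set (Pd d)} (p : Pd d → ℝ) (μ ν : SignedMeasure ↥Ω) : ℝ :=
  Jfun μ - Jfun ν - sInt (μ - ν) (fun w => p (w : Pd d))

/-!
Write `G = K(ν - μ†) = Kν - Kμ†`. By Fubini, integrating `L_ρ φ` against a signed measure `μ`
is the `L²(ρ)` pairing of `φ` with `Kμ`, so the quantity to bound is `⟨f^δ - Kν, G⟩`.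
Splitting `f^δ - Kν = (f^δ - f) - G + (f - Kμ†)`, the last term pairs to zero with `G` by the
orthogonality condition, and completing the square gives `(f^δ - f) G - G² ≤ (f^δ - f)² / 4`
pointwise.
-/

section SignedIntegral

variable {α : Type*} [MeasurableSpace α]

lemma sInt_const_mul (μ : SignedMeasure α) (c : ℝ) (g : α → ℝ) :
    sInt μ (fun w => c * g w) = c * sInt μ g := by
  simp only [sInt, integral_const_mul, mul_sub]

lemma sInt_eq_of_eq_sub {μ : SignedMeasure α} {P N : Measure α} [IsFiniteMeasure P]
    [IsFiniteMeasure N] (hμ : μ = P.toSignedMeasure - N.toSignedMeasure) {g : α → ℝ}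
    (hg : ∀ (m : Measure α) [IsFiniteMeasure m], Integrable g m) :
    sInt μ g = ∫ w, g w ∂P - ∫ w, g w ∂N := by
  set j := μ.toJordanDecomposition
  have hsum : j.posPart + N = P + j.negPart := by
    rw [← Measure.toSignedMeasure_eq_toSignedMeasure_iff, Measure.toSignedMeasure_add,
      Measure.toSignedMeasure_add, ← sub_eq_sub_iff_add_eq_add, ← hμ]
    exact μ.toSignedMeasure_toJordanDecomposition
  have hint := congrArg (fun m => ∫ w, g w ∂m) hsum
  simp only [integral_add_measure (hg _) (hg _)] at hint
  rw [sInt]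
  linarith

lemma sInt_sub (μ ν : SignedMeasure α) {g : α → ℝ}
    (hg : ∀ (m : Measure α) [IsFiniteMeasure m], Integrable g m) :
    sInt (μ - ν) g = sInt μ g - sInt ν g := by
  set jμ := μ.toJordanDecomposition
  set jν := ν.toJordanDecomposition
  have hdecomp : μ - ν = (jμ.posPart + jν.negPart).toSignedMeasure
      - (jμ.negPart + jν.posPart).toSignedMeasure := by
    conv_lhs => rw [← μ.toSignedMeasure_toJordanDecomposition,
      ← ν.toSignedMeasure_toJordanDecomposition]
    simp only [JordanDecomposition.toSignedMeasure, Measure.toSignedMeasure_add]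
    abel
  rw [sInt_eq_of_eq_sub hdecomp hg, integral_add_measure (hg _) (hg _),
    integral_add_measure (hg _) (hg _), sInt, sInt]
  ring

lemma sInt_integral_comm {β : Type*} [MeasurableSpace β] {ρ : Measure β} [SFinite ρ]
    (μ : SignedMeasure α) {F : α → β → ℝ}
    (hF : ∀ (m : Measure α) [IsFiniteMeasure m], Integrable (Function.uncurry F) (m.prod ρ)) :
    sInt μ (fun w => ∫ x, F w x ∂ρ) = ∫ x, sInt μ (fun w => F w x) ∂ρ := by
  rw [sInt, integral_integral_swap (hF _), integral_integral_swap (hF _)]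
  exact (integral_sub (hF _).integral_prod_right (hF _).integral_prod_right).symm

end SignedIntegral

lemma integral_sub_mul_le_integral_sq_div_four {α : Type*} [MeasurableSpace α] {ρ : Measure α}
    {u v : α → ℝ} (hu : MemLp u 2 ρ) (hv : MemLp v 2 ρ) :
    ∫ x, (u x - v x) * v x ∂ρ ≤ (∫ x, u x ^ 2 ∂ρ) / 4 := by
  rw [← integral_div]
  refine integral_mono ((hu.sub hv).integrable_mul hv) (hu.integrable_sq.div_const 4) fun x => ?_
  nlinarith [sq_nonneg (u x - 2 * v x)]

section Feature

variable {d : ℕ} {σ : ℝ → ℝ} {L : NNReal}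

def feature (σ : ℝ → ℝ) (w : Pd d) (x : Ed d) : ℝ := σ (⟪w.1, x⟫ + w.2)

lemma continuous_feature (hσ : Continuous σ) :
    Continuous fun p : Pd d × Ed d => feature σ p.1 p.2 :=
  hσ.comp ((continuous_fst.fst.inner continuous_snd).add continuous_fst.snd)

lemma abs_feature_le (hσ : LipschitzWith L σ) {w : Pd d} {C : ℝ} (hw : ‖w‖ ≤ C) (x : Ed d) :
    |feature σ w x| ≤ (|σ 0| + L * C) * (1 + ‖x‖) := by
  set t := ⟪w.1, x⟫ + w.2
  have ht : |t| ≤ C * (1 + ‖x‖) :=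
    calc |t| ≤ ‖w.1‖ * ‖x‖ + ‖w.2‖ := (abs_add_le _ _).trans
          (add_le_add (abs_real_inner_le_norm _ _) le_rfl)
      _ ≤ C * ‖x‖ + C := by
          gcongr
          exacts [(norm_fst_le w).trans hw, (norm_snd_le w).trans hw]
      _ = C * (1 + ‖x‖) := by ring
  have hσt : |σ t - σ 0| ≤ L * |t| := by
    simpa [Real.dist_eq] using hσ.dist_le_mul t 0
  have hσ0 : |σ 0| ≤ |σ 0| * (1 + ‖x‖) := le_mul_of_one_le_right (abs_nonneg _) (by simp)
  calc |feature σ w x| ≤ |σ 0| + |σ t - σ 0| := by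
        simpa [feature, t] using abs_add_le (σ 0) (σ t - σ 0)
    _ ≤ |σ 0| * (1 + ‖x‖) + L * (C * (1 + ‖x‖)) :=
        add_le_add hσ0 (hσt.trans (mul_le_mul_of_nonneg_left ht L.coe_nonneg))
    _ = (|σ 0| + L * C) * (1 + ‖x‖) := by ring

variable {Ω : Set (Pd d)}

lemma continuous_feature_subtype (hσ : Continuous σ) :
    Continuous fun p : Ω × Ed d => feature σ p.1 p.2 :=
  (continuous_feature hσ).comp (continuous_subtype_val.prodMap continuous_id)

lemma exists_abs_feature_le (hΩ : Bornology.IsBounded Ω) (hσ : LipschitzWith L σ) :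
    ∃ B, ∀ (w : Ω) (x : Ed d), |feature σ w x| ≤ B * (1 + ‖x‖) := by
  obtain ⟨C, hC⟩ := hΩ.exists_norm_le
  exact ⟨_, fun w x => abs_feature_le hσ (hC w w.2) x⟩

lemma integrable_feature (hΩ : Bornology.IsBounded Ω) (hσ : LipschitzWith L σ)
    (m : Measure Ω) [IsFiniteMeasure m] (x : Ed d) :
    Integrable (fun w : Ω => feature σ w x) m := by
  obtain ⟨B, hB⟩ := exists_abs_feature_le hΩ hσ
  exact .of_bound ((continuous_feature_subtype hσ.continuous).comp
    (continuous_id.prodMk continuous_const)).aestronglyMeasurable _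
    (ae_of_all _ fun w => hB w x)

lemma Kop_sub (hΩ : Bornology.IsBounded Ω) (hσ : LipschitzWith L σ) (μ ν : SignedMeasure Ω) :
    Kop σ (μ - ν) = Kop σ μ - Kop σ ν :=
  funext fun x => sInt_sub μ ν fun m _ => integrable_feature hΩ hσ m x

variable {ρ : Measure (Ed d)} [IsFiniteMeasure ρ]

lemma memLp_one_add_norm (hρ2 : Integrable (fun x : Ed d => ‖x‖ ^ 2) ρ) :
    MemLp (fun x : Ed d => 1 + ‖x‖) 2 ρ :=
  (memLp_const (1 : ℝ)).add
    ((memLp_two_iff_integrable_sq continuous_norm.aestronglyMeasurable).2 hρ2)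

lemma memLp_integral_feature (hΩ : Bornology.IsBounded Ω) (hσ : LipschitzWith L σ)
    (hρ2 : Integrable (fun x : Ed d => ‖x‖ ^ 2) ρ) (m : Measure Ω) [IsFiniteMeasure m] :
    MemLp (fun x => ∫ w : Ω, feature σ w x ∂m) 2 ρ := by
  obtain ⟨B, hB⟩ := exists_abs_feature_le hΩ hσ
  have hmeas : StronglyMeasurable fun x => ∫ w : Ω, feature σ (w : Pd d) x ∂m :=
    .integral_prod_left (continuous_feature_subtype (Ω := Ω) hσ.continuous).stronglyMeasurable
  refine (memLp_one_add_norm hρ2).of_le_mul hmeas.aestronglyMeasurable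
    (c := B * m.real Set.univ) (ae_of_all _ fun x => ?_)
  calc ‖∫ w : Ω, feature σ w x ∂m‖ ≤ B * (1 + ‖x‖) * m.real Set.univ :=
        norm_integral_le_of_norm_le_const (ae_of_all _ fun w => hB w x)
    _ = B * m.real Set.univ * ‖1 + ‖x‖‖ := by
        rw [Real.norm_of_nonneg (by positivity)]
        ring

lemma memLp_Kop (hΩ : Bornology.IsBounded Ω) (hσ : LipschitzWith L σ)
    (hρ2 : Integrable (fun x : Ed d => ‖x‖ ^ 2) ρ) (μ : SignedMeasure Ω) :
    MemLp (Kop σ μ) 2 ρ :=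
  (memLp_integral_feature hΩ hσ hρ2 _).sub (memLp_integral_feature hΩ hσ hρ2 _)

lemma integrable_mul_feature (hΩ : Bornology.IsBounded Ω) (hσ : LipschitzWith L σ)
    (hρ2 : Integrable (fun x : Ed d => ‖x‖ ^ 2) ρ) {φ : Ed d → ℝ} (hφ : MemLp φ 2 ρ)
    (m : Measure Ω) [IsFiniteMeasure m] :
    Integrable (Function.uncurry fun (w : Ω) x => φ x * feature σ w x) (m.prod ρ) := by
  obtain ⟨B, hB⟩ := exists_abs_feature_le hΩ hσ
  have hdom := (integrable_const (1 : ℝ)).mul_prod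
    ((hφ.norm.integrable_mul (memLp_one_add_norm hρ2)).const_mul B) (μ := m)
  refine hdom.mono' (hφ.aestronglyMeasurable.comp_snd.mul
    (continuous_feature_subtype hσ.continuous).aestronglyMeasurable)
    (ae_of_all _ fun p => ?_)
  calc ‖φ p.2 * feature σ p.1 p.2‖ ≤ ‖φ p.2‖ * (B * (1 + ‖p.2‖)) := by
        rw [norm_mul]
        exact mul_le_mul_of_nonneg_left (hB p.1 p.2) (norm_nonneg _)
    _ = 1 * (B * (‖φ p.2‖ * (1 + ‖p.2‖))) := by ring

lemma sInt_Lop (hΩ : Bornology.IsBounded Ω) (hσ : LipschitzWith L σ)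
    (hρ2 : Integrable (fun x : Ed d => ‖x‖ ^ 2) ρ) {φ : Ed d → ℝ} (hφ : MemLp φ 2 ρ)
    (μ : SignedMeasure Ω) :
    sInt μ (fun w => Lop σ ρ φ w) = ∫ x, φ x * Kop σ μ x ∂ρ :=
  (sInt_integral_comm μ (integrable_mul_feature hΩ hσ hρ2 hφ)).trans
    (integral_congr_ae (ae_of_all _ fun x => sInt_const_mul μ (φ x) _))

end Feature

theorem noisy_descent_bound_general
    {d : ℕ} (Ω : Set (Pd d)) (hΩ : IsCompact Ω)
    (ρ : Measure (Ed d)) [IsProbabilityMeasure ρ]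
    (hρ2 : Integrable (fun x : Ed d => ‖x‖ ^ 2) ρ)
    (σ : ℝ → ℝ) (Lσ : NNReal) (hσ : LipschitzWith Lσ σ)
    (f : Ed d → ℝ) (hf2 : MemLp f 2 ρ)
    (δ : ℝ)
    (fδ : Ed d → ℝ) (hfδ2 : MemLp fδ 2 ρ)
    (hnoise : L2norm ρ (fun x => fδ x - f x) ≤ δ)
    (μdag : SignedMeasure ↥Ω)
    (horth : ∀ w ∈ Ω, Lop σ ρ (fun x => f x - Kop σ μdag x) w = 0) :
    ∀ ν : SignedMeasure ↥Ω,
      sInt (ν - μdag) (fun w => Lop σ ρ (fun x => fδ x - Kop σ ν x) (w : Pd d)) ≤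
        δ ^ 2 / 4 := by
  intro ν
  have hK : ∀ μ : SignedMeasure Ω, MemLp (Kop σ μ) 2 ρ := memLp_Kop hΩ.isBounded hσ hρ2
  set G := Kop σ (ν - μdag)
  have hG : G = Kop σ ν - Kop σ μdag := Kop_sub hΩ.isBounded hσ ν μdag
  have hpair {φ : Ed d → ℝ} (hφ : MemLp φ 2 ρ) :
      sInt (ν - μdag) (fun w => Lop σ ρ φ w) = ∫ x, φ x * G x ∂ρ :=
    sInt_Lop hΩ.isBounded hσ hρ2 hφ _
  have horth_G : ∫ x, (f x - Kop σ μdag x) * G x ∂ρ = 0 := by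
    rw [← hpair (φ := fun x => f x - Kop σ μdag x) (hf2.sub (hK μdag))]
    simp only [horth _ (Subtype.prop _), sInt, integral_zero, sub_zero]
  have hint : Integrable (fun x => (fδ x - Kop σ ν x) * G x) ρ :=
    (hfδ2.sub (hK ν)).integrable_mul (hK _)
  have hint_orth : Integrable (fun x => (f x - Kop σ μdag x) * G x) ρ :=
    (hf2.sub (hK μdag)).integrable_mul (hK _)
  calc _ = ∫ x, (fδ x - Kop σ ν x) * G x ∂ρ - ∫ x, (f x - Kop σ μdag x) * G x ∂ρ := by
        rw [horth_G, sub_zero]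
        exact hpair (hfδ2.sub (hK ν))
    _ = ∫ x, (fδ x - f x - G x) * G x ∂ρ := by
        rw [← integral_sub hint hint_orth, hG]
        congr 1 with x
        simp only [Pi.sub_apply]
        ring
    _ ≤ L2sq ρ (fun x => fδ x - f x) / 4 :=
        integral_sub_mul_le_integral_sq_div_four (hfδ2.sub hf2) (hK _)
    _ ≤ δ ^ 2 / 4 := by
        gcongr
        exact (Real.sqrt_le_iff.mp hnoise).2

/-- With measurement noise ‖f^δ − f‖_{L²(ρ)} ≤ δ and μ† satisfying the
orthogonality condition for f, for every ν: ∫_Ω L_ρ(f^δ − Kν) d(ν − μ†) ≤ δ²/4. -/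
theorem noisy_descent_bound
    {d : ℕ} (Ω : Set (Pd d)) (hΩ : IsCompact Ω)
    (ρ : Measure (Ed d)) [IsProbabilityMeasure ρ]
    (hρ2 : Integrable (fun x : Ed d => ‖x‖ ^ 2) ρ)
    (σ : ℝ → ℝ) (Lσ : NNReal) (hσ : LipschitzWith Lσ σ)
    (f : Ed d → ℝ) (hfm : Measurable f) (hf2 : MemLp f 2 ρ)
    (δ : ℝ) (hδ : 0 < δ)
    (fδ : Ed d → ℝ) (hfδm : Measurable fδ) (hfδ2 : MemLp fδ 2 ρ)
    (hnoise : L2norm ρ (fun x => fδ x - f x) ≤ δ)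
    (μdag : SignedMeasure ↥Ω)
    (horth : ∀ w ∈ Ω, Lop σ ρ (fun x => f x - Kop σ μdag x) w = 0) :
    ∀ ν : SignedMeasure ↥Ω,
      sInt (ν - μdag) (fun w => Lop σ ρ (fun x => fδ x - Kop σ ν x) (w : Pd d)) ≤
        δ ^ 2 / 4 :=
  noisy_descent_bound_general Ω hΩ ρ hρ2 σ Lσ hσ f hf2 δ fδ hfδ2 hnoise μdag horth

end
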